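/- arXiv:1909.12394 — 5 statements merged into one kernel-verified Lean document; each statement's English description precedes it below -/
import Mathlib

section
/- Every connected simple graph on n ≥ 2 vertices that is not a tree has strictly more than 2^(n-1) acyclic orientations. -/
open MvPolynomial Finset
open scoped Classical

noncomputable section

/-- The Schur polynomial `s_μ` in `n` variables, defined via the Jacobi–Trudi
identity `s_μ = det (h_{μ_i - i + j})`. -/
def schurPart (n : ℕ) (μ : n.Partition) : MvPolynomial (Fin n) ℚ :=
  letI L := (μ.parts.sort (· ≤ ·)).reverse
  Matrix.det (Matrix.of fun i j : Fin L.length =>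
    if (i : ℕ) ≤ L.get i + (j : ℕ) then hsymm (Fin n) ℚ (L.get i + (j : ℕ) - (i : ℕ)) else 0)

/-- The chromatic symmetric function of a graph `G`, restricted to `n` variables:
the sum over proper colorings `κ : V → Fin n` of the monomials `∏ x_{κ v}`. -/
def csf {V : Type} [Fintype V] (n : ℕ) (G : SimpleGraph V) : MvPolynomial (Fin n) ℚ :=
  ∑ κ ∈ (univ : Finset (V → Fin n)).filter (fun κ => ∀ u v, G.Adj u v → κ u ≠ κ v),
    ∏ v, X (κ v)

/-- The chromatic polynomial of `G` evaluated at `k`: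
the number of proper colorings of `G` with `k` colors. -/
def chromPoly {V : Type} [Fintype V] (G : SimpleGraph V) (k : ℕ) : ℕ :=
  Nat.card (G.Coloring (Fin k))

/-- `r` is an acyclic orientation of `G`: it chooses exactly one direction for every
edge of `G̀` and has no directed cycles. -/
def IsAcyclicOrientation {V : Type} (G : SimpleGraph V) (r : V → V → Prop) : Prop :=
  (∀ u v, r u v → G.Adj u v) ∧ (∀ u v, G.Adj u v → (r u v ↔ ¬ r v u)) ∧
    ∀ v, ¬ Relation.TransGen r v v

/-- The number of acyclic orientations of `G`. -/
def acyclicOrientationCount {V : Type} (G : SimpleGraph V) : ℕ :=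
  Nat.card {r : V → V → Prop // IsAcyclicOrientation G r}

/-- The independence number of `G`. -/
def indepNum {V : Type} [Fintype V] (G : SimpleGraph V) : ℕ :=
  ((univ : Finset (Finset V)).filter fun s => ∀ a ∈ s, ∀ b ∈ s, a ≠ b → ¬ G.Adj a b).sup
    Finset.card

/-- The partition `(1^n)` of `n`. -/
def onesP (n : ℕ) : n.Partition :=
  Nat.Partition.ofSums n (Multiset.replicate n 1) (by simp)

/-- The hook partition `(a, 1^{n-a})` of `n` (defined for all `a` via `min a n`). -/
def hookP (n a : ℕ) : n.Partition :=
  Nat.Partition.ofSums n (min a n ::ₘ Multiset.replicate (n - a) 1)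
    (by simp [Multiset.sum_replicate]; omega)

/-- The two-part partition `(a, b)` of `n = a + b`. -/
def twoP (n a b : ℕ) (h : a + b = n) : n.Partition :=
  Nat.Partition.ofSums n {a, b} (by simpa using h)

/-!
Take a spanning tree `T` of `G`. Every orientation of a forest is acyclic, so `T` has
`2 ^ (n - 1)` acyclic orientations, and each of them extends to an acyclic orientation of `G`
(orient `G` along a linear extension of its reachability order). Restriction to `T` is therefore
onto; it is not injective because an edge `ab` of `G` outside `T` can be oriented either way
when `a` and `b` are the two top vertices of a ranking of the vertices.
-/

namespace SimpleGraph

variable {V : Type} {G H : SimpleGraph V}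

lemma isAcyclicOrientation_of_injective {α : Type*} [LinearOrder α] (G : SimpleGraph V)
    {f : V → α} (hf : Function.Injective f) :
    IsAcyclicOrientation G (fun u v => G.Adj u v ∧ f u < f v) := by
  refine ⟨fun u v h => h.1, fun u v h => ?_, fun v hv => ?_⟩
  · simp only [h, h.symm, true_and, not_lt]
    exact ⟨le_of_lt, fun h' => h'.lt_of_ne (hf.ne h.ne)⟩
  · have hlt : Relation.TransGen (· < ·) (f v) (f v) :=
      Relation.TransGen.lift f (fun _ _ h => h.2) _ _ hv
    rw [Relation.transGen_eq_self] at hlt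
    exact lt_irrefl _ hlt

lemma IsAcyclicOrientation.restrict {o : V → V → Prop} (ho : IsAcyclicOrientation G o)
    (hHG : H ≤ G) : IsAcyclicOrientation H (fun u v => H.Adj u v ∧ o u v) :=
  ⟨fun _ _ h => h.1, fun u v h => by simp [h, h.symm, ho.2.1 u v (hHG h)],
    fun v hv => ho.2.2 v (Relation.TransGen.mono (fun _ _ h => h.2) _ _ hv)⟩

lemma IsAcyclicOrientation.exists_extend {r : V → V → Prop} (hr : IsAcyclicOrientation H r)
    (hHG : H ≤ G) : ∃ o, IsAcyclicOrientation G o ∧ (fun u v => H.Adj u v ∧ o u v) = r := by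
  let _ : PartialOrder V :=
    { le := Relation.ReflTransGen r
      le_refl := fun _ => .refl
      le_trans := fun _ _ _ => .trans
      le_antisymm := fun u v huv hvu => by
        rcases Relation.reflTransGen_iff_eq_or_transGen.mp huv with h | h
        · exact h.symm
        · exact (hr.2.2 u (h.trans_left hvu)).elim }
  have hmono : StrictMono (toLinearExtension : V →o LinearExtension V) :=
    toLinearExtension.monotone.strictMono_of_injective fun _ _ h => h
  refine ⟨_, isAcyclicOrientation_of_injective G (f := toLinearExtension) fun _ _ h => h, ?_⟩
  funext u v
  apply propext
  constructor
  · rintro ⟨hH, -, hlt⟩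
    by_contra huv
    have hvu : v ≤ u := Relation.ReflTransGen.single ((hr.2.1 v u hH.symm).mpr huv)
    exact (hmono.monotone hvu).not_gt hlt
  · intro huv
    have hH := hr.1 u v huv
    exact ⟨hH, hHG hH, hmono (lt_of_le_of_ne (Relation.ReflTransGen.single huv) hH.ne)⟩

lemma exists_walk_of_reflTransGen {r : V → V → Prop} (hr : ∀ u v, r u v → G.Adj u v) {u v : V}
    (h : Relation.ReflTransGen r u v) : ∃ p : G.Walk u v, ∀ d ∈ p.darts, r d.fst d.snd := by
  induction h using Relation.ReflTransGen.head_induction_on with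
  | refl => exact ⟨.nil, by simp⟩
  | head huc _ ih =>
    obtain ⟨p, hp⟩ := ih
    exact ⟨.cons (hr _ _ huc) p, by simpa [huc] using hp⟩

/-- A directed cycle through the edge `v → w` would give a directed walk from `w` back to `v`;
in a forest its bypass must be the edge itself, traversed as `w → v`. -/
lemma IsAcyclic.isAcyclicOrientation (hG : G.IsAcyclic) {r : V → V → Prop}
    (hadj : ∀ u v, r u v → G.Adj u v) (horient : ∀ u v, G.Adj u v → (r u v ↔ ¬ r v u)) :
    IsAcyclicOrientation G r := by
  refine ⟨hadj, horient, fun v hv => ?_⟩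
  obtain ⟨w, hvw, hwv⟩ := Relation.TransGen.head'_iff.mp hv
  obtain ⟨p, hp⟩ := exists_walk_of_reflTransGen hadj hwv
  have hwv' : G.Adj w v := (hadj _ _ hvw).symm
  have hbypass : p.bypass = .cons hwv' .nil :=
    congrArg Subtype.val <|
      (hG.subsingleton_path w v).elim ⟨p.bypass, p.bypass_isPath⟩ (.singleton hwv')
  have hrwv : r w v := hp ⟨(w, v), hwv'⟩ (p.darts_bypass_subset_darts (by simp [hbypass]))
  exact (horient v w hwv'.symm).mp hvw hrwv

lemma IsAcyclic.two_pow_card_edgeFinset_le [Fintype V] [Fintype G.edgeSet] (hG : G.IsAcyclic) :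
    2 ^ #G.edgeFinset ≤ acyclicOrientationCount G := by
  let e := Fintype.equivFin V
  let orient (S : Finset (Sym2 V)) : V → V → Prop :=
    fun u v => G.Adj u v ∧ (e u < e v ↔ s(u, v) ∉ S)
  have horient (S : Finset (Sym2 V)) : IsAcyclicOrientation G (orient S) :=
    hG.isAcyclicOrientation (fun _ _ h => h.1) fun u v h => by
      have hne : e u ≠ e v := e.injective.ne h.ne
      have hlt : e v < e u ↔ ¬ e u < e v := by omega
      simp only [orient, h, h.symm, true_and, Sym2.eq_swap, hlt]
      tauto
  have hinj : Set.InjOn (fun S => (⟨orient S, horient S⟩ : {r // IsAcyclicOrientation G r}))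
      G.edgeFinset.powerset := by
    intro S hS S' hS' hSS'
    have hsame : ∀ x ∈ G.edgeFinset, x ∈ S ↔ x ∈ S' := by
      intro x hx
      induction x using Sym2.ind with
      | h u v =>
        have := congrFun₂ (congrArg Subtype.val hSS') u v
        simp only [orient, eq_iff_iff, mem_edgeFinset, mem_edgeSet] at this hx
        tauto
    ext x
    by_cases hx : x ∈ G.edgeFinset
    · exact hsame x hx
    · exact iff_of_false (fun h => hx (mem_powerset.mp hS h)) fun h => hx (mem_powerset.mp hS' h)
  calc 2 ^ #G.edgeFinset = #G.edgeFinset.powerset := (card_powerset _).symm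
    _ ≤ #(univ : Finset {r // IsAcyclicOrientation G r}) :=
      card_le_card_of_injOn _ (fun _ _ => mem_univ _) hinj
    _ = acyclicOrientationCount G := by
      rw [card_univ, acyclicOrientationCount, Nat.card_eq_fintype_card]

/-- Rank `b` on top and `a` just below it, or the other way round: only the edge `ab` is
oriented differently. -/
lemma exists_isAcyclicOrientation_flip [Finite V] {a b : V} (hab : G.Adj a b) :
    ∃ o₁ o₂ : V → V → Prop, IsAcyclicOrientation G o₁ ∧ IsAcyclicOrientation G o₂ ∧
      o₁ a b ∧ o₂ b a ∧ ∀ u v, s(u, v) ≠ s(a, b) → (o₁ u v ↔ o₂ u v) := by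
  obtain ⟨N, ⟨e⟩⟩ := Finite.exists_equiv_fin V
  let rank (x y v : V) : ℕ := if v = x then N + 1 else if v = y then N else e v
  have hrank (x y : V) : Function.Injective (rank x y) := by
    intro u v h
    have := (e u).isLt
    have := (e v).isLt
    simp only [rank] at h
    split_ifs at h <;> first | omega | (subst_vars; rfl) | exact e.injective (Fin.ext h)
  refine ⟨_, _, isAcyclicOrientation_of_injective G (hrank b a),
    isAcyclicOrientation_of_injective G (hrank a b), ⟨hab, by simp [rank, hab.ne]⟩,
    ⟨hab.symm, by simp [rank, hab.ne.symm]⟩, fun u v huv => and_congr_right fun _ => ?_⟩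
  have := (e u).isLt
  have := (e v).isLt
  simp only [rank]
  split_ifs <;> subst_vars <;> simp_all <;> omega

lemma acyclicOrientationCount_lt_of_lt [Finite V] (h : H < G) :
    acyclicOrientationCount H < acyclicOrientationCount G := by
  have := Fintype.ofFinite V
  obtain ⟨a, b, hab, hnab⟩ : ∃ a b, G.Adj a b ∧ ¬ H.Adj a b := by
    by_contra! hGH
    exact h.not_ge fun u v => hGH u v
  let restrict (o : {o // IsAcyclicOrientation G o}) : {r // IsAcyclicOrientation H r} :=
    ⟨_, IsAcyclicOrientation.restrict o.2 h.le⟩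
  have hsurj : Function.Surjective restrict := fun r =>
    let ⟨o, ho, hor⟩ := IsAcyclicOrientation.exists_extend r.2 h.le
    ⟨⟨o, ho⟩, Subtype.ext hor⟩
  obtain ⟨o₁, o₂, ho₁, ho₂, ho₁ab, ho₂ba, hagree⟩ := exists_isAcyclicOrientation_flip hab
  have hnotinj : ¬ Function.Injective restrict := fun hinj => by
    have hsame : restrict ⟨o₁, ho₁⟩ = restrict ⟨o₂, ho₂⟩ :=
      Subtype.ext <| funext₂ fun u v => propext <| and_congr_right fun huv =>
        hagree u v fun he => hnab (H.mem_edgeSet.mp (he ▸ H.mem_edgeSet.mpr huv))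
    have ho : o₁ = o₂ := congrArg Subtype.val (hinj hsame)
    subst ho
    exact (ho₁.2.1 a b hab).mp ho₁ab ho₂ba
  simpa only [acyclicOrientationCount, Nat.card_eq_fintype_card] using
    Fintype.card_lt_of_surjective_not_injective restrict hsurj hnotinj

end SimpleGraph

theorem nonTree_acyclicOrientationCount_general {V : Type} [Fintype V] (n : ℕ)
    (hV : Fintype.card V = n) (G : SimpleGraph V) (hconn : G.Connected)
    (hG : ¬ G.IsTree) :
    2 ^ (n - 1) < acyclicOrientationCount G := by
  obtain ⟨T, hTG, hT⟩ := hconn.exists_isTree_le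
  have hTltG : T < G := hTG.lt_of_ne fun hTeqG => hG (hTeqG ▸ hT)
  calc 2 ^ (n - 1) = 2 ^ #T.edgeFinset := by rw [← hV, ← hT.card_edgeFinset, Nat.add_sub_cancel]
    _ ≤ acyclicOrientationCount T := hT.isAcyclic.two_pow_card_edgeFinset_le
    _ < acyclicOrientationCount G := SimpleGraph.acyclicOrientationCount_lt_of_lt hTltG

/-- Every connected simple graph on `n ≥ 2` vertices that is not a tree has strictly more
than `2^(n-1)` acyclic orientations. -/
theorem nonTree_acyclicOrientationCount {V : Type} [Fintype V] (n : ℕ)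
    (hV : Fintype.card V = n) (hn : 2 ≤ n) (G : SimpleGraph V) (hconn : G.Connected)
    (hG : ¬ G.IsTree) :
    2 ^ (n - 1) < acyclicOrientationCount G :=
  nonTree_acyclicOrientationCount_general n hV G hconn hG
end
end

section
/- For any simple graph G on n vertices and any edge ε of G, the coefficient of e_{(n)} in X_G satisfies [e_{(n)}]X_G = [e_{(n)}]X_{G-ε} + (n/(n-1))·[e_{(n-1)}]X_{G/ε}, where G-ε denotes deletion of ε and G/ε denotes contraction along ε. -/
open MvPolynomial Finset
open scoped Classical

noncomputable section

/-- The contraction of the graph `G` along the edge between `u` and `v`: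
the vertex `v` is removed and merged into `u`. -/
def contract {V : Type} (G : SimpleGraph V) (u v : V) : SimpleGraph {w : V // w ≠ v} where
  Adj a b := a ≠ b ∧ (G.Adj (a : V) (b : V) ∨ ((a : V) = u ∧ G.Adj v (b : V)) ∨
    ((b : V) = u ∧ G.Adj (a : V) v))
  symm := by
    constructor
    rintro a b ⟨h1, h2⟩
    refine ⟨h1.symm, ?_⟩
    rcases h2 with h | ⟨h, h'⟩ | ⟨h, h'⟩
    · exact Or.inl h.symm
    · exact Or.inr (Or.inr ⟨h, h'.symm⟩)
    · exact Or.inr (Or.inl ⟨h, h'.symm⟩)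
  loopless := ⟨fun a h => h.1 rfl⟩


/-!
Setting the first `k ≤ n` variables to `1` and the others to `0` turns `X_G` into the number of
proper `k`-colourings of `G` and `e_μ` into `∏ᵢ (k choose μᵢ)`. Since the colouring count is a
polynomial in `k` of degree at most `n`, an `e`-expansion `X_G = ∑ c_μ e_μ` therefore yields the
chromatic polynomial `χ_G = ∑ c_μ ∏ᵢ (X choose μᵢ)`. Every `X choose i` with `i ≥ 1` is divisible
by `X`, so only `μ = (n)` contributes to the linear coefficient, and
`[k]χ_G = (-1)^{n-1} c_{(n)} / n`. Taking linear coefficients in the deletion–contraction identity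
`χ_{G-ε} = χ_G + χ_{G/ε}` gives the claim.
-/

open scoped Nat Polynomial

theorem Nat.Partition.two_le_card_parts_of_ne_indiscrete {n : ℕ} {μ : n.Partition}
    (hμ : μ ≠ .indiscrete n) : 2 ≤ Multiset.card μ.parts := by
  by_contra! h
  apply hμ
  interval_cases hc : Multiset.card μ.parts
  · obtain rfl : n = 0 := by simpa [Multiset.card_eq_zero.mp hc] using μ.parts_sum.symm
    exact Subsingleton.elim _ _
  · obtain ⟨a, ha⟩ := Multiset.card_eq_one.mp hc
    have hn : a = n := by simpa [ha] using μ.parts_sum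
    have ha0 : a ≠ 0 := (μ.parts_pos (by simp [ha])).ne'
    ext1
    rw [ha, indiscrete_parts (hn ▸ ha0), hn]

namespace Polynomial

theorem coeff_one_descPochhammer_succ {R : Type*} [CommRing R] (n : ℕ) :
    (descPochhammer R (n + 1)).coeff 1 = (-1) ^ n * n ! := by
  have eval_neg_one (n : ℕ) : (descPochhammer R n).eval (-1) = (-1) ^ n * n ! := by
    induction n with
    | zero => simp
    | succ n ih => rw [descPochhammer_succ_eval, ih, Nat.factorial_succ]; push_cast; ring
  rw [descPochhammer_succ_left, coeff_X_mul, coeff_zero_eq_eval_zero, eval_comp]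
  simpa using eval_neg_one n

/-- The polynomial `X choose i`. -/
def binomialPoly (i : ℕ) : ℚ[X] := C (i ! : ℚ)⁻¹ * descPochhammer ℚ i

theorem eval_binomialPoly (i k : ℕ) : (binomialPoly i).eval (k : ℚ) = k.choose i := by
  rw [binomialPoly, eval_mul, eval_C, descPochhammer_eval_eq_descFactorial,
    Nat.descFactorial_eq_factorial_mul_choose, Nat.cast_mul,
    inv_mul_cancel_left₀ (by positivity)]

theorem natDegree_binomialPoly (i : ℕ) : (binomialPoly i).natDegree = i := by
  rw [binomialPoly, natDegree_C_mul (by positivity), descPochhammer_natDegree]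

theorem X_dvd_binomialPoly {i : ℕ} (hi : i ≠ 0) : X ∣ binomialPoly i := by
  obtain ⟨i, rfl⟩ := Nat.exists_eq_succ_of_ne_zero hi
  exact dvd_mul_of_dvd_right (descPochhammer_succ_left ℚ i ▸ dvd_mul_right _ _) _

theorem coeff_one_binomialPoly_succ (n : ℕ) :
    (binomialPoly (n + 1)).coeff 1 = (-1) ^ n / (n + 1) := by
  rw [binomialPoly, coeff_C_mul, coeff_one_descPochhammer_succ, Nat.factorial_succ]
  push_cast
  field_simp

/-- The image of `e_μ` under `x_i ↦ 1` for `i < k`, `x_i ↦ 0` otherwise, as a polynomial in `k`. -/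
def partitionBinomialPoly {n : ℕ} (μ : n.Partition) : ℚ[X] := (μ.parts.map binomialPoly).prod

theorem eval_partitionBinomialPoly {n : ℕ} (μ : n.Partition) (k : ℕ) :
    (partitionBinomialPoly μ).eval (k : ℚ) = (μ.parts.map fun i => (k.choose i : ℚ)).prod := by
  simp [partitionBinomialPoly, eval_multiset_prod, Multiset.map_map, eval_binomialPoly]

theorem natDegree_partitionBinomialPoly_le {n : ℕ} (μ : n.Partition) :
    (partitionBinomialPoly μ).natDegree ≤ n := by
  refine (natDegree_multiset_prod_le _).trans_eq ?_
  simp [Multiset.map_map, natDegree_binomialPoly, μ.parts_sum]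

theorem coeff_one_partitionBinomialPoly_of_ne_indiscrete {n : ℕ} {μ : n.Partition}
    (hμ : μ ≠ .indiscrete n) : (partitionBinomialPoly μ).coeff 1 = 0 := by
  have hX : X ^ 2 ∣ partitionBinomialPoly μ := by
    refine (pow_dvd_pow X (Nat.Partition.two_le_card_parts_of_ne_indiscrete hμ)).trans ?_
    simpa [partitionBinomialPoly] using Multiset.prod_dvd_prod_of_dvd (fun _ => X) binomialPoly
      fun i hi => X_dvd_binomialPoly (μ.parts_pos hi).ne'
  obtain ⟨q, hq⟩ := hX
  simp [hq, coeff_X_pow_mul']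

theorem coeff_one_partitionBinomialPoly_indiscrete (n : ℕ) :
    (partitionBinomialPoly (.indiscrete (n + 1))).coeff 1 = (-1) ^ n / (n + 1) := by
  simp [partitionBinomialPoly, coeff_one_binomialPoly_succ]

theorem coeff_one_sum_smul_partitionBinomialPoly {n : ℕ} (c : (n + 1).Partition → ℚ) :
    (∑ μ, c μ • partitionBinomialPoly μ).coeff 1 =
      c (.indiscrete (n + 1)) * ((-1) ^ n / (n + 1)) := by
  rw [finsetSum_coeff, Finset.sum_eq_single_of_mem _ (mem_univ _), coeff_smul,
    coeff_one_partitionBinomialPoly_indiscrete, smul_eq_mul]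
  intro μ _ hμ
  rw [coeff_smul, coeff_one_partitionBinomialPoly_of_ne_indiscrete hμ, smul_zero]

end Polynomial

namespace MvPolynomial

variable {σ R : Type*} [CommSemiring R] [Fintype σ] [DecidableEq σ]

theorem eval_indicator_esymm (S : Finset σ) (m : ℕ) :
    eval (fun i => if i ∈ S then 1 else 0) (esymm σ R m) = (#S).choose m := by
  have h : {t ∈ powersetCard m (univ : Finset σ) | ∀ i ∈ t, i ∈ S} = powersetCard m S := by
    ext t
    simp [mem_powersetCard, subset_iff, and_comm]
  simp only [esymm, map_sum, map_prod, eval_X, prod_boole]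
  rw [← card_powersetCard, ← h, natCast_card_filter]
  congr!

theorem eval_indicator_esymmPart (S : Finset σ) {n : ℕ} (μ : n.Partition) :
    eval (fun i => if i ∈ S then 1 else 0) (esymmPart σ R μ) =
      (μ.parts.map fun i => ((#S).choose i : R)).prod := by
  simp [esymmPart, map_multiset_prod, Multiset.map_map, eval_indicator_esymm]

end MvPolynomial

namespace SimpleGraph

variable {W : Type}

theorem deleteEdges_lt {H : SimpleGraph W} {u v : W} (huv : H.Adj u v) :
    H.deleteEdges {s(u, v)} < H :=
  (deleteEdges_le _).lt_of_ne (by simpa using huv)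

theorem forall_contract_adj_ne_iff {H : SimpleGraph W} {u v : W} (huv : u ≠ v) {k : ℕ}
    {κ : W → Fin k} (hκ : κ u = κ v) :
    (∀ a b : {w // w ≠ v}, (contract H u v).Adj a b → κ a ≠ κ b) ↔
      ∀ a b, (H.deleteEdges {s(u, v)}).Adj a b → κ a ≠ κ b := by
  simp only [contract, deleteEdges_adj, Set.mem_singleton_iff, Sym2.eq_iff, Subtype.forall,
    ne_eq, Subtype.mk.injEq]
  constructor
  · intro h a b ⟨hab, he⟩
    have := H.ne_of_adj hab
    by_cases ha : a = v <;> grind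
  · grind [H.ne_of_adj]

variable [Fintype W]

def properColorings (H : SimpleGraph W) (k : ℕ) : Finset (W → Fin k) :=
  univ.filter fun κ => ∀ a b, H.Adj a b → κ a ≠ κ b

theorem card_properColorings_of_forall_not_adj {H : SimpleGraph W} (hH : ∀ a b, ¬ H.Adj a b)
    (k : ℕ) : #(H.properColorings k) = k ^ Fintype.card W := by
  simp [properColorings, hH]

theorem filter_ne_properColorings_deleteEdges {H : SimpleGraph W} {u v : W} (huv : H.Adj u v)
    (k : ℕ) :
    {κ ∈ (H.deleteEdges {s(u, v)}).properColorings k | κ u ≠ κ v} = H.properColorings k := by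
  ext κ
  simp only [properColorings, mem_filter, mem_univ, true_and, deleteEdges_adj,
    Set.mem_singleton_iff]
  refine ⟨fun ⟨hκ, hne⟩ a b hab => ?_, fun hκ => ⟨fun a b hab => hκ a b hab.1, hκ u v huv⟩⟩
  by_cases he : s(a, b) = s(u, v)
  · rcases Sym2.eq_iff.mp he with ⟨rfl, rfl⟩ | ⟨rfl, rfl⟩
    exacts [hne, hne.symm]
  · exact hκ a b ⟨hab, he⟩

theorem card_filter_eq_properColorings_deleteEdges {H : SimpleGraph W} {u v : W}
    (huv : u ≠ v) (k : ℕ) :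
    #{κ ∈ (H.deleteEdges {s(u, v)}).properColorings k | κ u = κ v} =
      #((contract H u v).properColorings k) := by
  let merge (κ : {w // w ≠ v} → Fin k) (w : W) : Fin k :=
    if h : w = v then κ ⟨u, huv⟩ else κ ⟨w, h⟩
  have merge_restrict {κ : W → Fin k} (hκ : κ u = κ v) : merge (fun w => κ w) = κ := by
    funext w; by_cases h : w = v <;> simp [merge, h, hκ]
  refine Finset.card_bij' (fun κ _ w => κ w) (fun κ _ => merge κ) ?_ ?_ ?_ ?_
  · simp only [properColorings, mem_filter, mem_univ, true_and]
    rintro κ ⟨hκ, huv'⟩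
    exact (forall_contract_adj_ne_iff huv huv').2 hκ
  · intro κ hκ
    have h : merge κ u = merge κ v := by simp [merge, huv]
    simp only [properColorings, mem_filter, mem_univ, true_and] at hκ ⊢
    refine ⟨(forall_contract_adj_ne_iff huv h).1 fun a b hab => ?_, h⟩
    simpa [merge, a.2, b.2] using hκ a b hab
  · intro κ hκ
    exact merge_restrict (mem_filter.mp hκ).2
  · intro κ _
    funext w
    simp [merge, w.2]

theorem card_properColorings_deleteEdges {H : SimpleGraph W} {u v : W} (huv : H.Adj u v)
    (k : ℕ) : #((H.deleteEdges {s(u, v)}).properColorings k) =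
      #(H.properColorings k) + #((contract H u v).properColorings k) := by
  rw [← card_filter_add_card_filter_not (fun κ : W → Fin k => κ u = κ v),
    filter_ne_properColorings_deleteEdges huv,
    card_filter_eq_properColorings_deleteEdges (H.ne_of_adj huv), add_comm]

theorem filter_properColorings_eq_map_castLEEmb (H : SimpleGraph W) {k n : ℕ} (hk : k ≤ n) :
    {κ ∈ H.properColorings n | ∀ v, κ v ∈ univ.map (Fin.castLEEmb hk)} =
      (H.properColorings k).map (Function.Embedding.arrowCongrRight (Fin.castLEEmb hk)) := by
  ext κ
  simp only [properColorings, mem_filter, mem_univ, true_and, mem_map,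
    Fin.coe_castLEEmb, Function.Embedding.arrowCongrRight_apply]
  constructor
  · rintro ⟨hκ, hrange⟩
    choose κ' hκ' using hrange
    obtain rfl : Fin.castLE hk ∘ κ' = κ := funext hκ'
    exact ⟨κ', fun a b hab h => hκ a b hab (congrArg (Fin.castLE hk) h), rfl⟩
  · rintro ⟨κ', hκ', rfl⟩
    exact ⟨fun a b hab h => hκ' a b hab (Fin.castLE_injective hk h), fun v => ⟨κ' v, rfl⟩⟩

-- Lexicographic induction: deletion makes the graph smaller, contraction removes a vertex.
theorem exists_polynomial_eval_eq_card_properColorings (H : SimpleGraph W) :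
    ∃ R : ℚ[X], R.natDegree ≤ Fintype.card W ∧
      ∀ k : ℕ, R.eval (k : ℚ) = #(H.properColorings k) := by
  induction hW : Fintype.card W using Nat.strong_induction_on generalizing W with
  | _ m ihW =>
  induction H using WellFoundedLT.induction with
  | _ H ihH =>
  by_cases hE : ∃ u v, H.Adj u v
  · obtain ⟨u, v, huv⟩ := hE
    obtain ⟨Rd, hRd, hRd_eval⟩ := ihH _ (deleteEdges_lt huv)
    have hm : Fintype.card {w // w ≠ v} < m := by
      have : 0 < Fintype.card W := Fintype.card_pos_iff.mpr ⟨u⟩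
      simp [Fintype.card_subtype_compl]; omega
    obtain ⟨Rc, hRc, hRc_eval⟩ := ihW _ hm (contract H u v) rfl
    refine ⟨Rd - Rc, (Polynomial.natDegree_sub_le _ _).trans (max_le hRd (hRc.trans hm.le)),
      fun k => ?_⟩
    rw [Polynomial.eval_sub, hRd_eval, hRc_eval, card_properColorings_deleteEdges huv]
    push_cast
    ring
  · push Not at hE
    exact ⟨Polynomial.X ^ m, by simp, fun k => by
      simp [card_properColorings_of_forall_not_adj hE, hW]⟩

def chromaticPolynomial (H : SimpleGraph W) : ℚ[X] :=
  (exists_polynomial_eval_eq_card_properColorings H).choose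

theorem natDegree_chromaticPolynomial_le (H : SimpleGraph W) :
    H.chromaticPolynomial.natDegree ≤ Fintype.card W :=
  (exists_polynomial_eval_eq_card_properColorings H).choose_spec.1

theorem eval_chromaticPolynomial (H : SimpleGraph W) (k : ℕ) :
    H.chromaticPolynomial.eval (k : ℚ) = #(H.properColorings k) :=
  (exists_polynomial_eval_eq_card_properColorings H).choose_spec.2 k

theorem eq_chromaticPolynomial_of_eval {H : SimpleGraph W} {R : ℚ[X]}
    (hR : R.natDegree ≤ Fintype.card W)
    (h : ∀ k ≤ Fintype.card W, R.eval (k : ℚ) = #(H.properColorings k)) :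
    R = H.chromaticPolynomial := by
  have hdeg {P : ℚ[X]} (hP : P.natDegree ≤ Fintype.card W) :
      P.degree < #((range (Fintype.card W + 1)).map (Nat.castEmbedding : ℕ ↪ ℚ)) := by
    rw [card_map, card_range]
    exact Polynomial.degree_le_natDegree.trans_lt (by exact_mod_cast Nat.lt_succ_of_le hP)
  refine Polynomial.eq_of_degrees_lt_of_eval_finset_eq _ (hdeg hR)
    (hdeg H.natDegree_chromaticPolynomial_le) ?_
  simp only [mem_map, mem_range, Nat.castEmbedding_apply]
  rintro _ ⟨k, hk, rfl⟩
  rw [h k (by omega), eval_chromaticPolynomial]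

theorem chromaticPolynomial_deleteEdges {H : SimpleGraph W} {u v : W} (huv : H.Adj u v) :
    (H.deleteEdges {s(u, v)}).chromaticPolynomial =
      H.chromaticPolynomial + (contract H u v).chromaticPolynomial := by
  refine Polynomial.eq_of_infinite_eval_eq _ _
    ((Set.infinite_range_of_injective Nat.cast_injective).mono ?_)
  rintro _ ⟨k, rfl⟩
  simp [eval_chromaticPolynomial, card_properColorings_deleteEdges huv]

end SimpleGraph

theorem eval_indicator_csf {V : Type} [Fintype V] {n : ℕ} (G : SimpleGraph V)
    (S : Finset (Fin n)) :
    eval (fun i => if i ∈ S then 1 else 0) (csf n G) =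
      #{κ ∈ G.properColorings n | ∀ v, κ v ∈ S} := by
  simp only [csf, map_sum, map_prod, eval_X, Finset.prod_boole, mem_univ, true_implies]
  rw [natCast_card_filter]
  rfl

open SimpleGraph Polynomial in
theorem sum_smul_partitionBinomialPoly_eq_chromaticPolynomial {V : Type} [Fintype V] {n : ℕ}
    {G : SimpleGraph V} (hV : Fintype.card V = n) {c : n.Partition → ℚ}
    (hc : csf n G = ∑ μ, c μ • esymmPart (Fin n) ℚ μ) :
    ∑ μ, c μ • partitionBinomialPoly μ = G.chromaticPolynomial := by
  subst hV
  refine eq_chromaticPolynomial_of_eval (natDegree_sum_le_of_forall_le _ _ fun μ _ =>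
    (natDegree_smul_le _ _).trans (natDegree_partitionBinomialPoly_le μ)) fun k hk => ?_
  have h := congrArg (MvPolynomial.eval fun i =>
    if i ∈ univ.map (Fin.castLEEmb hk) then 1 else 0) hc
  rw [eval_indicator_csf, filter_properColorings_eq_map_castLEEmb, card_map, map_sum] at h
  rw [h, eval_finsetSum]
  simp only [MvPolynomial.smul_eval, MvPolynomial.eval_indicator_esymmPart, card_map, card_univ,
    Fintype.card_fin, eval_smul, eval_partitionBinomialPoly, smul_eq_mul]

theorem coeff_one_chromaticPolynomial {V : Type} [Fintype V] {n : ℕ} {G : SimpleGraph V}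
    (hV : Fintype.card V = n + 1) {c : (n + 1).Partition → ℚ}
    (hc : csf (n + 1) G = ∑ μ, c μ • esymmPart (Fin (n + 1)) ℚ μ) :
    c (.indiscrete (n + 1)) = (-1) ^ n * (n + 1) * G.chromaticPolynomial.coeff 1 := by
  rw [← sum_smul_partitionBinomialPoly_eq_chromaticPolynomial hV hc,
    Polynomial.coeff_one_sum_smul_partitionBinomialPoly]
  field_simp
  rw [← pow_mul, pow_mul', neg_one_sq, one_pow, mul_one]

/-- For any simple graph `G` on `n` vertices and any edge `ε` of `G`,
`[e_{(n)}]X_G = [e_{(n)}]X_{G-ε} + (n/(n-1)) · [e_{(n-1)}]X_{G/ε}`. -/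
theorem csf_coeff_e_top_deletion_contraction {V : Type} [Fintype V] (n : ℕ)
    (hV : Fintype.card V = n) (G : SimpleGraph V) (u v : V) (huv : G.Adj u v)
    (c : n.Partition → ℚ)
    (hc : csf n G = ∑ μ : n.Partition, c μ • esymmPart (Fin n) ℚ μ)
    (c' : n.Partition → ℚ)
    (hc' : csf n (G.deleteEdges {s(u, v)}) = ∑ μ : n.Partition, c' μ • esymmPart (Fin n) ℚ μ)
    (c'' : (n - 1).Partition → ℚ)
    (hc'' : csf (n - 1) (contract G u v) =
      ∑ μ : (n - 1).Partition, c'' μ • esymmPart (Fin (n - 1)) ℚ μ) :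
    c (Nat.Partition.indiscrete n) = c' (Nat.Partition.indiscrete n) +
      ((n : ℚ) / ((n : ℚ) - 1)) * c'' (Nat.Partition.indiscrete (n - 1)) := by
  obtain ⟨m, rfl⟩ : ∃ m, n = m + 2 :=
    ⟨n - 2, by have := Fintype.one_lt_card_iff.mpr ⟨u, v, G.ne_of_adj huv⟩; omega⟩
  have hV'' : Fintype.card {w // w ≠ v} = m + 1 := by simp [Fintype.card_subtype_compl, hV]
  change _ = _ + _ * c'' (.indiscrete (m + 1))
  rw [coeff_one_chromaticPolynomial hV hc, coeff_one_chromaticPolynomial hV hc',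
    coeff_one_chromaticPolynomial hV'' hc'', SimpleGraph.chromaticPolynomial_deleteEdges huv,
    Polynomial.coeff_add, pow_succ, show ((m + 2 : ℕ) : ℚ) - 1 = m + 1 by push_cast; ring]
  push_cast
  field_simp
  ring
end
end

section
/- Every connected simple graph on n ≥ 4 vertices that is not a tree admits a partition of its vertex set into two blocks, each of size at least 2, such that the graph restricted to each block is connected. -/
/-! A cycle of length at least four splits into one of its edges and the path formed by the rest
of the cycle. A triangle together with an outside neighbour `v` of one of its vertices `u` splits
into the edge `vu` and the opposite edge of the triangle. Finally, a split of a vertex set extends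
to any vertex adjacent to it, by adding that vertex to the block containing its neighbour; in a
connected graph a split of maximal size therefore covers every vertex. -/

open MvPolynomial Finset
open scoped Classical

noncomputable section

namespace SimpleGraph

variable {V : Type*} {G : SimpleGraph V} {s : Set V} {u v : V}

def HasConnectedSplit (G : SimpleGraph V) (s : Set V) : Prop :=
  ∃ a b : Set V, a ∪ b = s ∧ Disjoint a b ∧ 2 ≤ a.ncard ∧ 2 ≤ b.ncard ∧
    (G.induce a).Connected ∧ (G.induce b).Connected

lemma Preconnected.exists_adj_of_mem_of_notMem (hG : G.Preconnected) {w : V} (hu : u ∈ s)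
    (hw : w ∉ s) : ∃ v ∉ s, ∃ u ∈ s, G.Adj v u := by
  obtain ⟨d, -, hd, hd'⟩ := (hG u w).some.exists_boundary_dart s hu hw
  exact ⟨d.snd, hd', d.fst, hd, d.adj.symm⟩

lemma induce_insert_connected (hs : (G.induce s).Connected) (hu : u ∈ s) (hadj : G.Adj v u) :
    (G.induce (insert v s)).Connected := by
  have h := induce_union_connected (induce_pair_connected_of_adj hadj).preconnected
    hs.preconnected ⟨u, by simp, hu⟩
  rwa [Set.insert_union, Set.singleton_union, Set.insert_eq_of_mem hu] at h

lemma HasConnectedSplit.insert (h : G.HasConnectedSplit s) (hv : v ∉ s) (hu : u ∈ s)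
    (hadj : G.Adj v u) : G.HasConnectedSplit (insert v s) := by
  obtain ⟨a, b, rfl, hab, ha, hb, hac, hbc⟩ := h
  have hva : v ∉ a := fun h => hv (Or.inl h)
  have hvb : v ∉ b := fun h => hv (Or.inr h)
  rcases hu with hu | hu
  · refine ⟨insert v a, b, Set.insert_union, Set.disjoint_insert_left.mpr ⟨hvb, hab⟩, ?_, hb,
      induce_insert_connected hac hu hadj, hbc⟩
    rw [Set.ncard_insert_of_notMem hva (Set.finite_of_ncard_ne_zero (by omega))]
    omega
  · refine ⟨a, insert v b, Set.union_insert, Set.disjoint_insert_right.mpr ⟨hva, hab⟩, ha, ?_,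
      hac, induce_insert_connected hbc hu hadj⟩
    rw [Set.ncard_insert_of_notMem hvb (Set.finite_of_ncard_ne_zero (by omega))]
    omega

lemma Walk.IsCycle.hasConnectedSplit_support {x : V} {c : G.Walk x x} (hc : c.IsCycle)
    (hlen : 4 ≤ c.length) : G.HasConnectedSplit {v | v ∈ c.support} := by
  -- `c` runs `x → v₁ → v₂ → r`: split it into the edge `v₁v₂` and the path `r` back to `x`
  rcases c with _ | @⟨_, v₁, _, _, _ | @⟨_, v₂, _, h₂, _ | ⟨_, r⟩⟩⟩ <;>
    simp only [Walk.length_cons, Walk.length_nil] at hlen <;> try omega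
  have hnodup := hc.support_nodup
  simp only [Walk.support_cons, List.tail_cons, List.nodup_cons, List.mem_cons, not_or] at hnodup
  obtain ⟨⟨-, hv₁⟩, hv₂, hr⟩ := hnodup
  refine ⟨{v₁, v₂}, {v | v ∈ r.support}, ?_, ?_, (Set.ncard_pair h₂.ne).ge, ?_,
    induce_pair_connected_of_adj h₂, r.connected_induce_support⟩
  · have := r.end_mem_support
    ext y
    simp only [Walk.support_cons, List.mem_cons, Set.mem_union, Set.mem_insert_iff,
      Set.mem_singleton_iff, Set.mem_ofPred_eq]
    grind
  · rw [Set.disjoint_left]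
    rintro y (rfl | rfl) <;> assumption
  · rw [← List.coe_toFinset, Set.ncard_coe_finset, List.toFinset_card_of_nodup hr,
      Walk.length_support]
    omega

lemma IsNClique.hasConnectedSplit_insert {t : Finset V} (ht : G.IsNClique 3 t) (hu : u ∈ t)
    (hv : v ∉ t) (hadj : G.Adj v u) : G.HasConnectedSplit (insert v (t : Set V)) := by
  obtain ⟨p, q, hpq, hrest⟩ : ∃ p q, p ≠ q ∧ t.erase u = {p, q} := by
    rw [← Finset.card_eq_two, Finset.card_erase_of_mem hu, ht.card_eq]
  have hp : p ∈ t.erase u := by simp [hrest]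
  have hq : q ∈ t.erase u := by simp [hrest]
  refine ⟨{v, u}, {p, q}, ?_, ?_, (Set.ncard_pair hadj.ne).ge, (Set.ncard_pair hpq).ge,
    induce_pair_connected_of_adj hadj,
    induce_pair_connected_of_adj (ht.isClique (Finset.mem_of_mem_erase hp)
      (Finset.mem_of_mem_erase hq) hpq)⟩
  · rw [← Finset.insert_erase hu, hrest]
    push_cast
    rw [Set.insert_union, Set.singleton_union]
  · simp only [Finset.mem_erase] at hp hq
    rw [Set.disjoint_left]
    rintro y (rfl | rfl) (rfl | rfl) <;> grind

lemma Preconnected.hasConnectedSplit_univ [Finite V] (hG : G.Preconnected)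
    (h : G.HasConnectedSplit s) : G.HasConnectedSplit Set.univ := by
  obtain ⟨t, ht, hmax⟩ :=
    Set.exists_max_image {t | G.HasConnectedSplit t} Set.ncard (Set.toFinite _) ⟨s, h⟩
  by_contra hne
  obtain ⟨w, hw⟩ := (Set.ne_univ_iff_exists_notMem t).mp fun h => hne (h ▸ ht)
  obtain ⟨u, hu⟩ : t.Nonempty := by
    obtain ⟨a, b, rfl, -, ha, -⟩ := ht
    exact (Set.nonempty_of_ncard_ne_zero (by omega)).mono Set.subset_union_left
  obtain ⟨v, hv, u, hu, hadj⟩ := hG.exists_adj_of_mem_of_notMem hu hw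
  have := hmax _ (ht.insert hv hu hadj)
  rw [Set.ncard_insert_of_notMem hv] at this
  omega

lemma Preconnected.exists_hasConnectedSplit_of_not_isAcyclic [Fintype V] (hG : G.Preconnected)
    (hV : 4 ≤ Fintype.card V) (hcyc : ¬G.IsAcyclic) : ∃ s, G.HasConnectedSplit s := by
  obtain ⟨x, c, hc⟩ : ∃ x, ∃ c : G.Walk x x, c.IsCycle := by simpa [IsAcyclic] using hcyc
  obtain hlen | hlen := hc.three_le_length.eq_or_lt
  · obtain ⟨t, ht⟩ := is3Clique_iff_exists_cycle_length_three.mpr ⟨x, c, hc, hlen.symm⟩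
    obtain ⟨u, hu⟩ : t.Nonempty := by rw [← Finset.card_pos, ht.card_eq]; norm_num
    obtain ⟨w, -, hw⟩ := Finset.exists_mem_notMem_of_card_lt_card
      (s := t) (t := Finset.univ) (by rw [ht.card_eq, Finset.card_univ]; omega)
    obtain ⟨v, hv, u, hu, hadj⟩ := hG.exists_adj_of_mem_of_notMem (s := t) hu hw
    exact ⟨_, ht.hasConnectedSplit_insert hu hv hadj⟩
  · exact ⟨_, hc.hasConnectedSplit_support hlen⟩

end SimpleGraph

/-- Every connected simple graph on `n ≥ 4` vertices that is not a tree admits a partition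
of its vertex set into two blocks, each of size at least `2`, such that the graph
restricted to each block is connected. -/
theorem nonTree_connected_partition_two_blocks {V : Type} [Fintype V] (n : ℕ)
    (hV : Fintype.card V = n) (hn : 4 ≤ n) (G : SimpleGraph V) (hconn : G.Connected)
    (hG : ¬ G.IsTree) :
    ∃ s : Set V, 2 ≤ Nat.card s ∧ 2 ≤ Nat.card ↥(sᶜ) ∧
      (G.induce s).Connected ∧ (G.induce sᶜ).Connected := by
  obtain ⟨s, hs⟩ := hconn.preconnected.exists_hasConnectedSplit_of_not_isAcyclic (hV ▸ hn)
    fun hacyc => hG ⟨hconn, hacyc⟩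
  obtain ⟨a, b, hab, hdisj, ha, hb, hac, hbc⟩ := hconn.preconnected.hasConnectedSplit_univ hs
  obtain rfl : aᶜ = b := IsCompl.compl_eq ⟨hdisj, codisjoint_iff.mpr hab⟩
  simp only [Nat.card_coe_set_eq]
  exact ⟨a, ha, hb, hac, hbc⟩
end
end

section
/- Let G be the unit interval graph on [n] determined by a weakly increasing sequence m = (m_1,...,m_{n-1}) with i ≤ m_i ≤ n. Then the number of acyclic orientations of G equals Π_{i=1}^{n-1} (m_i - i + 1). -/
open MvPolynomial Finset
open scoped Classical

noncomputable section

/-- The unit interval graph on vertices `{1, ..., n}` (encoded as `Fin n`, vertex `v`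
corresponding to the number `v + 1`) determined by a sequence `m`: vertices `a` and `b`
are adjacent iff `a ≠ b` and `a, b ∈ [i, m i]` for some `i ∈ {1, ..., n-1}`. -/
def uig (n : ℕ) (m : ℕ → ℕ) : SimpleGraph (Fin n) where
  Adj a b := a ≠ b ∧ ∃ i ∈ Finset.Icc 1 (n - 1),
    (i ≤ (a : ℕ) + 1 ∧ (a : ℕ) + 1 ≤ m i) ∧ (i ≤ (b : ℕ) + 1 ∧ (b : ℕ) + 1 ≤ m i)
  symm := ⟨by
    rintro a b ⟨h1, i, hi, ha, hb⟩
    exact ⟨h1.symm, i, hi, hb, ha⟩⟩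
  loopless := ⟨fun a h => h.1 rfl⟩

/-! Vertex `1` of the unit interval graph is simplicial: its neighbours `2, …, m₁` are pairwise
adjacent because `m` is weakly increasing. For a simplicial vertex `v` of degree `d`, an acyclic
orientation of `G` amounts to an acyclic orientation of `G - v` together with the set of
neighbours whose edge points into `v`; that set must be an initial segment of the linear order
induced on the clique `N(v)`, and any of the `d + 1` initial segments will do. Deleting vertex `1`
leaves the unit interval graph of `(m₂ - 1, …, m_{n-1} - 1)`, so induction gives the product. -/

open Function Relation

namespace Relation

variable {α β : Type*}

theorem transGen_map_le {r : α → α → Prop} {f : α → β} (hf : f.Injective) :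
    TransGen (Relation.Map r f f) ≤ Relation.Map (TransGen r) f f := by
  intro c d h
  induction h with
  | single h =>
    obtain ⟨x, y, hxy, rfl, rfl⟩ := h
    exact ⟨x, y, .single hxy, rfl, rfl⟩
  | tail _ h ih =>
    obtain ⟨x, y, hxy, rfl, rfl⟩ := ih
    obtain ⟨y', z, hyz, hy, rfl⟩ := h
    exact ⟨x, z, hxy.tail (hf hy ▸ hyz), rfl, rfl⟩

theorem map_acyclic {r : α → α → Prop} {f : α → β} (hf : f.Injective)
    (hr : ∀ a, ¬ TransGen r a a) (c : β) : ¬ TransGen (Relation.Map r f f) c c := by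
  intro hc
  obtain ⟨a, b, hab, rfl, hb⟩ := transGen_map_le hf _ _ hc
  exact hr a (hf hb ▸ hab)

def insertBetween (q : α → α → Prop) (v : α) (S T : Set α) (x y : α) : Prop :=
  (x ≠ v ∧ y ≠ v ∧ q x y) ∨ (x ∈ S ∧ y = v) ∨ (x = v ∧ y ∈ T)

variable {q : α → α → Prop} {v : α} {S T : Set α} {x y : α}

theorem insertBetween_iff_of_ne (hx : x ≠ v) (hy : y ≠ v) : insertBetween q v S T x y ↔ q x y := by
  simp [insertBetween, hx, hy]

theorem insertBetween_self_right_iff (hvT : v ∉ T) : insertBetween q v S T x v ↔ x ∈ S := by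
  by_cases hx : x = v <;> simp_all [insertBetween]

theorem insertBetween_self_left_iff (hvS : v ∉ S) : insertBetween q v S T v y ↔ y ∈ T := by
  by_cases hy : y = v <;> simp_all [insertBetween]

/-- A path of `insertBetween q v S T` that passes through `v` enters it from some `a ∈ S` and
leaves it towards some `b ∈ T`; since `q a b`, the detour can be cut out. -/
theorem transGen_insertBetween (hvS : v ∉ S) (hvT : v ∉ T) (hST : ∀ a ∈ S, ∀ b ∈ T, q a b)
    (hx : x ≠ v) (h : TransGen (insertBetween q v S T) x y) :
    (y ≠ v → TransGen q x y) ∧ (y = v → ∃ a ∈ S, ReflTransGen q x a) := by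
  induction h with
  | single h =>
    rcases h with ⟨-, hy, h⟩ | ⟨hxS, rfl⟩ | ⟨rfl, -⟩
    · exact ⟨fun _ => .single h, fun h' => absurd h' hy⟩
    · exact ⟨fun hy => absurd rfl hy, fun _ => ⟨x, hxS, .refl⟩⟩
    · exact absurd rfl hx
  | @tail z y _ h ih =>
    rcases h with ⟨hz, hy, h⟩ | ⟨hzS, rfl⟩ | ⟨rfl, hyT⟩
    · exact ⟨fun _ => (ih.1 hz).tail h, fun h' => absurd h' hy⟩
    · exact ⟨fun hy => absurd rfl hy,
        fun _ => ⟨z, hzS, (ih.1 fun hz => hvS (hz ▸ hzS)).to_reflTransGen⟩⟩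
    · obtain ⟨a, haS, hxa⟩ := ih.2 rfl
      exact ⟨fun _ => .tail' hxa (hST a haS y hyT), fun hy => absurd (hy ▸ hyT) hvT⟩

theorem insertBetween_acyclic (hq : ∀ x, ¬ TransGen q x x) (hvS : v ∉ S) (hvT : v ∉ T)
    (hST : ∀ a ∈ S, ∀ b ∈ T, q a b) (x : α) : ¬ TransGen (insertBetween q v S T) x x := by
  intro hxx
  by_cases hx : x = v
  · subst hx
    obtain ⟨b, hxb, hbx⟩ := TransGen.head'_iff.mp hxx
    have hb : b ≠ x := by
      rintro rfl
      rcases hxb with ⟨h, -, -⟩ | ⟨h, -⟩ | ⟨-, h⟩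
      exacts [h rfl, hvS h, hvT h]
    exact hq b ((transGen_insertBetween hvS hvT hST hb (.tail' hbx hxb)).1 hb)
  · exact hq x ((transGen_insertBetween hvS hvT hST hx hxx).1 hx)

theorem exists_forall_not_rel_of_acyclic [Finite α] (hq : ∀ x, ¬ TransGen q x x) {s : Set α}
    (hs : s.Nonempty) : ∃ u ∈ s, ∀ b ∈ s, ¬ q b u := by
  have : Std.Irrefl (TransGen q) := ⟨hq⟩
  obtain ⟨u, hu, hmin⟩ := (Finite.wellFounded_of_trans_of_irrefl (TransGen q)).has_min s hs
  exact ⟨u, hu, fun b hb hbu => hmin b hb (.single hbu)⟩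

end Relation

def IsLowerIn {α : Type*} (q : α → α → Prop) (N S : Finset α) : Prop :=
  S ⊆ N ∧ ∀ a ∈ S, ∀ b ∈ N, q b a → b ∈ S

namespace IsLowerIn

variable {α : Type*} {q q' : α → α → Prop} {N S T : Finset α}

theorem mono (h : ∀ a ∈ N, ∀ b ∈ N, q' b a → q b a) (hS : IsLowerIn q N S) : IsLowerIn q' N S :=
  ⟨hS.1, fun a ha b hb hba => hS.2 a ha b hb (h a (hS.1 ha) b hb hba)⟩

theorem eq_of_card_eq (htot : ∀ a ∈ N, ∀ b ∈ N, a ≠ b → q a b ∨ q b a) (hS : IsLowerIn q N S)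
    (hT : IsLowerIn q N T) (h : #S = #T) : S = T := by
  by_contra hne
  obtain ⟨a, haS, haT⟩ := not_subset.1 fun hST => hne (eq_of_subset_of_card_le hST h.ge)
  obtain ⟨b, hbT, hbS⟩ := not_subset.1 fun hTS => hne (eq_of_subset_of_card_le hTS h.le).symm
  rcases htot a (hS.1 haS) b (hT.1 hbT) (fun hab => haT (hab ▸ hbT)) with hab | hba
  · exact haT (hT.2 b hbT a (hS.1 haS) hab)
  · exact hbS (hS.2 a haS b (hT.1 hbT) hba)

end IsLowerIn

theorem exists_isLowerIn_card {α : Type*} [Finite α] {q : α → α → Prop}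
    (hq : ∀ x, ¬ Relation.TransGen q x x) (N : Finset α) {k : ℕ} (hk : k ≤ #N) :
    ∃ S, IsLowerIn q N S ∧ #S = k := by
  induction k with
  | zero => exact ⟨∅, ⟨empty_subset _, by simp⟩, card_empty⟩
  | succ k ih =>
    obtain ⟨S, ⟨hSN, hS⟩, rfl⟩ := ih (by omega)
    have hne : (N \ S : Set α).Nonempty := by
      rw [← coe_sdiff, coe_nonempty, ← card_pos, card_sdiff_of_subset hSN]
      omega
    obtain ⟨u, hu, hmin⟩ := Relation.exists_forall_not_rel_of_acyclic hq hne
    rw [← coe_sdiff, mem_coe, mem_sdiff] at hu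
    refine ⟨insert u S, ⟨insert_subset hu.1 hSN, ?_⟩, card_insert_of_notMem hu.2⟩
    intro a ha b hb hba
    rcases mem_insert.1 ha with rfl | ha
    · by_contra hbS
      exact hmin b (by simpa [hb] using fun h => hbS (mem_insert_of_mem h)) hba
    · exact mem_insert_of_mem (hS a ha b hb hba)

namespace IsAcyclicOrientation

variable {V W : Type} {G : SimpleGraph V} {H : SimpleGraph W} {r : V → V → Prop}

theorem comap {r : W → W → Prop} (hr : IsAcyclicOrientation H r) (f : G ↪g H) :
    IsAcyclicOrientation G (r on f) :=
  ⟨fun _ _ h => f.map_adj_iff.1 (hr.1 _ _ h), fun _ _ h => hr.2.1 _ _ (f.map_adj_iff.2 h),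
    fun x h => hr.2.2 (f x) (h.lift f fun _ _ => id)⟩

theorem rel_iff (hr : IsAcyclicOrientation G r) {x y : V} : r x y ↔ G.Adj x y ∧ ¬ r y x :=
  ⟨fun h => ⟨hr.1 x y h, (hr.2.1 x y (hr.1 x y h)).1 h⟩, fun h => (hr.2.1 x y h.1).2 h.2⟩

theorem rel_or_rel (hr : IsAcyclicOrientation G r) {x y : V} (h : G.Adj x y) : r x y ∨ r y x :=
  or_iff_not_imp_right.2 (hr.2.1 x y h).2

end IsAcyclicOrientation

theorem acyclicOrientationCount_congr {V W : Type} {G : SimpleGraph V} {H : SimpleGraph W}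
    (e : G ≃g H) : acyclicOrientationCount G = acyclicOrientationCount H :=
  Nat.card_congr
    { toFun r := ⟨r.1 on e.symm, r.2.comap e.symm.toEmbedding⟩
      invFun s := ⟨s.1 on e, s.2.comap e.toEmbedding⟩
      left_inv r := by ext; simp [onFun]
      right_inv s := by ext; simp [onFun] }

theorem acyclicOrientationCount_bot {V : Type} :
    acyclicOrientationCount (⊥ : SimpleGraph V) = 1 := by
  refine Nat.card_eq_one_iff_exists.2 ⟨⟨fun _ _ => False, by simp, by simp, fun x h => ?_⟩, ?_⟩
  · cases h <;> assumption
  · rintro ⟨r, hr⟩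
    ext x y
    exact iff_of_false (hr.1 x y) id

section Simplicial

open SimpleGraph

variable {V : Type} [Fintype V] {G : SimpleGraph V} {v : V}

theorem IsAcyclicOrientation.isLowerIn_filter_rel {r : V → V → Prop}
    (hr : IsAcyclicOrientation G r) (v : V) : IsLowerIn r (G.neighborFinset v) {x | r x v} := by
  refine ⟨fun x hx => ?_, fun a ha b hb hba => ?_⟩
  · exact (mem_neighborFinset ..).2 (hr.1 x v (mem_filter.1 hx).2).symm
  · rw [mem_filter] at ha ⊢
    refine ⟨mem_univ _, by_contra fun hbv => hr.2.2 v ?_⟩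
    have hvb : r v b := hr.rel_iff.2 ⟨(mem_neighborFinset ..).1 hb, hbv⟩
    exact ((TransGen.single hvb).tail hba).tail ha.2

theorem IsAcyclicOrientation.eq_of_card_filter_eq (hv : G.IsClique (G.neighborSet v))
    {r₁ r₂ : V → V → Prop} (h₁ : IsAcyclicOrientation G r₁) (h₂ : IsAcyclicOrientation G r₂)
    (hoff : ∀ x y, x ≠ v → y ≠ v → (r₁ x y ↔ r₂ x y))
    (hcard : #{x | r₁ x v} = #{x | r₂ x v}) : r₁ = r₂ := by
  have hN : ∀ x ∈ G.neighborFinset v, x ≠ v := fun x hx =>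
    (G.ne_of_adj ((mem_neighborFinset ..).1 hx)).symm
  have hin : filter (r₁ · v) univ = filter (r₂ · v) univ :=
    (h₁.isLowerIn_filter_rel v).eq_of_card_eq
      (fun a ha b hb hab => h₁.rel_or_rel (hv (by simpa using ha) (by simpa using hb) hab))
      ((h₂.isLowerIn_filter_rel v).mono fun a ha b hb => (hoff b a (hN b hb) (hN a ha)).1) hcard
  have hin' (x : V) : r₁ x v ↔ r₂ x v := by simpa using Finset.ext_iff.1 hin x
  ext x y
  by_cases hy : y = v
  · exact hy ▸ hin' x
  by_cases hx : x = v
  · rw [hx, h₁.rel_iff, h₂.rel_iff, hin']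
  · exact hoff x y hx hy

theorem isAcyclicOrientation_insertBetween (hv : G.IsClique (G.neighborSet v))
    {r' : ({v}ᶜ : Set V) → ({v}ᶜ : Set V) → Prop} (hr' : IsAcyclicOrientation (G.induce {v}ᶜ) r')
    {S : Finset V}
    (hS : IsLowerIn (Relation.Map r' Subtype.val Subtype.val) (G.neighborFinset v) S) :
    IsAcyclicOrientation G
      (insertBetween (Relation.Map r' Subtype.val Subtype.val) v S ↑(G.neighborFinset v \ S)) := by
  set q := Relation.Map r' Subtype.val Subtype.val
  set N := G.neighborFinset v
  have hvN : v ∉ N := G.notMem_neighborFinset_self v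
  have hvS : v ∉ S := fun h => hvN (hS.1 h)
  have hq (x y : V) (hx : x ≠ v) (hy : y ≠ v) : q x y ↔ r' ⟨x, hx⟩ ⟨y, hy⟩ :=
    map_apply_apply Subtype.val_injective Subtype.val_injective r' ⟨x, hx⟩ ⟨y, hy⟩
  refine ⟨?_, ?_, insertBetween_acyclic ?_ hvS (by simp [hvN]) ?_⟩
  · rintro x y (⟨-, -, a, b, h, rfl, rfl⟩ | ⟨hx, rfl⟩ | ⟨rfl, hy⟩)
    · exact hr'.1 a b h
    · exact ((mem_neighborFinset ..).1 (hS.1 hx)).symm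
    · exact (mem_neighborFinset ..).1 (mem_sdiff.1 hy).1
  · intro x y hxy
    by_cases hx : x = v
    · subst hx
      have hy : y ∈ N := (mem_neighborFinset ..).2 hxy
      rw [insertBetween_self_left_iff hvS, insertBetween_self_right_iff (by simp [hvN])]
      simp [hy]
    by_cases hy : y = v
    · subst hy
      have hx' : x ∈ N := (mem_neighborFinset ..).2 hxy.symm
      rw [insertBetween_self_left_iff hvS, insertBetween_self_right_iff (by simp [hvN])]
      simp [hx']
    rw [insertBetween_iff_of_ne hx hy, insertBetween_iff_of_ne hy hx, hq x y hx hy, hq y x hy hx]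
    exact hr'.2.1 ⟨x, hx⟩ ⟨y, hy⟩ hxy
  · exact map_acyclic Subtype.val_injective hr'.2.2
  · intro a ha b hb
    rw [coe_sdiff, Set.mem_sdiff, mem_coe, mem_coe] at hb
    have hne : a ≠ b := fun h => hb.2 (h ▸ ha)
    have ha' : a ≠ v := fun h => hvS (h ▸ ha)
    have hb' : b ≠ v := fun h => hvN (h ▸ hb.1)
    rw [hq a b ha' hb']
    refine (hr'.rel_or_rel (x := ⟨a, ha'⟩) (y := ⟨b, hb'⟩) (hv ?_ ?_ hne)).resolve_right
      fun hba => hb.2 ?_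
    · exact (mem_neighborFinset ..).1 (hS.1 ha)
    · exact (mem_neighborFinset ..).1 hb.1
    · exact hS.2 a ha b hb.1 ((hq b a hb' ha').2 hba)

theorem exists_isAcyclicOrientation_extend (hv : G.IsClique (G.neighborSet v))
    {r' : ({v}ᶜ : Set V) → ({v}ᶜ : Set V) → Prop} (hr' : IsAcyclicOrientation (G.induce {v}ᶜ) r')
    {k : ℕ} (hk : k ≤ G.degree v) :
    ∃ r, IsAcyclicOrientation G r ∧ (∀ a b : ({v}ᶜ : Set V), r a b ↔ r' a b) ∧
      #{x | r x v} = k := by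
  obtain ⟨S, hS, rfl⟩ := exists_isLowerIn_card (map_acyclic Subtype.val_injective hr'.2.2)
    (G.neighborFinset v) (k := k)
    (by rwa [card_neighborFinset_eq_degree])
  have hvT : v ∉ (↑(G.neighborFinset v \ S) : Set V) := by simp
  refine ⟨_, isAcyclicOrientation_insertBetween hv hr' hS, fun a b => ?_, ?_⟩
  · exact (insertBetween_iff_of_ne a.2 b.2).trans
      (map_apply_apply Subtype.val_injective Subtype.val_injective r' a b)
  · congr 1
    ext x
    rw [mem_filter, and_iff_right (mem_univ x)]
    exact insertBetween_self_right_iff hvT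

theorem acyclicOrientationCount_eq_mul_of_isClique_neighborSet
    (hv : G.IsClique (G.neighborSet v)) :
    acyclicOrientationCount G = (G.degree v + 1) * acyclicOrientationCount (G.induce {v}ᶜ) := by
  let f (r : {r // IsAcyclicOrientation G r}) :
      {r' // IsAcyclicOrientation (G.induce {v}ᶜ) r'} × Fin (G.degree v + 1) :=
    (⟨r.1 on Embedding.induce _, r.2.comap _⟩, ⟨#{x | r.1 x v}, Nat.lt_succ_of_le <| by
      rw [← card_neighborFinset_eq_degree]; exact card_le_card (r.2.isLowerIn_filter_rel v).1⟩)
  have hf : f.Bijective := by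
    refine ⟨fun r₁ r₂ h => Subtype.ext ?_, fun ⟨r', k⟩ => ?_⟩
    · simp only [f, Prod.mk.injEq, Subtype.mk.injEq, Fin.mk.injEq] at h
      refine r₁.2.eq_of_card_filter_eq hv r₂.2 (fun x y hx hy => ?_) h.2
      exact Iff.of_eq (congrFun₂ h.1 ⟨x, hx⟩ ⟨y, hy⟩)
    · obtain ⟨r, hr, hrr', hk⟩ := exists_isAcyclicOrientation_extend hv r'.2 (Nat.lt_succ_iff.1 k.2)
      refine ⟨⟨r, hr⟩, Prod.ext (Subtype.ext ?_) (Fin.ext hk)⟩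
      exact funext₂ fun a b => propext (hrr' a b)
  rw [acyclicOrientationCount, acyclicOrientationCount, Nat.card_congr (Equiv.ofBijective f hf),
    Nat.card_prod, Nat.card_fin, mul_comm]

end Simplicial

theorem Finset.prod_Icc_one_succ {M : Type*} [CommMonoid M] (f : ℕ → M) (k : ℕ) :
    ∏ i ∈ Icc 1 (k + 1), f i = f 1 * ∏ i ∈ Icc 1 k, f (i + 1) := by
  rw [← Ico_add_one_right_eq_Icc, ← Ico_add_one_right_eq_Icc, prod_eq_prod_Ico_succ_bot (by omega),
    prod_Ico_add']

section UnitInterval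

open SimpleGraph

variable {n : ℕ} {m : ℕ → ℕ}

theorem uig_adj_iff_of_lt (hm : MonotoneOn m (Set.Icc 1 (n - 1))) {a b : Fin n} (hab : a < b) :
    (uig n m).Adj a b ↔ (b : ℕ) + 1 ≤ m (a + 1) := by
  have hb := b.isLt
  have hab' : (a : ℕ) < b := hab
  constructor
  · rintro ⟨-, i, hi, ⟨hia, -⟩, -, hbm⟩
    rw [Finset.mem_Icc] at hi
    exact hbm.trans (hm ⟨hi.1, hi.2⟩ ⟨by omega, by omega⟩ hia)
  · intro h
    exact ⟨hab.ne, a + 1, Finset.mem_Icc.2 ⟨by omega, by omega⟩, ⟨le_rfl, by omega⟩, by omega, h⟩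

theorem uig_adj_iff (hm : MonotoneOn m (Set.Icc 1 (n - 1))) {a b : Fin n} :
    (uig n m).Adj a b ↔
      ((a : ℕ) < b ∧ (b : ℕ) + 1 ≤ m (a + 1)) ∨ ((b : ℕ) < a ∧ (a : ℕ) + 1 ≤ m (b + 1)) := by
  rcases lt_trichotomy a b with hab | rfl | hab
  · rw [uig_adj_iff_of_lt hm hab]
    have : (a : ℕ) < b := hab
    omega
  · simp
  · rw [adj_comm, uig_adj_iff_of_lt hm hab]
    have : (b : ℕ) < a := hab
    omega

theorem uig_eq_bot (hn : n ≤ 1) : uig n m = ⊥ := by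
  ext a b
  simp only [bot_adj, iff_false]
  exact fun h => h.1 (Fin.ext (by omega))

theorem uig_adj_zero_iff (hm : MonotoneOn m (Set.Icc 1 n)) {b : Fin (n + 1)} :
    (uig (n + 1) m).Adj 0 b ↔ 0 < (b : ℕ) ∧ (b : ℕ) + 1 ≤ m 1 := by
  simp [uig_adj_iff (n := n + 1) hm]

theorem uig_isClique_neighborSet_zero (hm : MonotoneOn m (Set.Icc 1 n)) :
    (uig (n + 1) m).IsClique ((uig (n + 1) m).neighborSet 0) := by
  intro a ha b hb hab
  rw [mem_neighborSet, uig_adj_zero_iff hm] at ha hb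
  have hab' : (a : ℕ) ≠ b := Fin.val_ne_of_ne hab
  have := a.isLt
  have := b.isLt
  rw [uig_adj_iff (n := n + 1) hm]
  rcases Nat.lt_or_gt_of_ne hab' with h | h
  · have : m 1 ≤ m (a + 1) := hm (a := 1) ⟨le_rfl, by omega⟩ ⟨by omega, by omega⟩ (by omega)
    omega
  · have : m 1 ≤ m (b + 1) := hm (a := 1) ⟨le_rfl, by omega⟩ ⟨by omega, by omega⟩ (by omega)
    omega

theorem uig_degree_zero (hm : MonotoneOn m (Set.Icc 1 n)) (h1 : m 1 ≤ n + 1) :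
    (uig (n + 1) m).degree 0 = m 1 - 1 := by
  rw [← card_neighborFinset_eq_degree, ← card_map Fin.valEmbedding]
  refine (congrArg card (a₂ := Finset.Icc 1 (m 1 - 1)) ?_).trans (by simp)
  ext x
  simp only [mem_map, mem_neighborFinset, uig_adj_zero_iff hm, Fin.valEmbedding_apply,
    Finset.mem_Icc]
  constructor
  · rintro ⟨a, ha, rfl⟩
    omega
  · intro hx
    exact ⟨⟨x, by omega⟩, by simp only; omega, rfl⟩

theorem MonotoneOn.sub_one_comp_succ (hm : MonotoneOn m (Set.Icc 1 n)) :
    MonotoneOn (fun i => m (i + 1) - 1) (Set.Icc 1 (n - 1)) := by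
  rintro i ⟨hi₁, hi⟩ j ⟨hj₁, hj⟩ hij
  exact Nat.sub_le_sub_right
    (hm (a := i + 1) (b := j + 1) ⟨by omega, by omega⟩ ⟨by omega, by omega⟩ (by omega)) 1

def uigSuccIso (hm : MonotoneOn m (Set.Icc 1 n)) :
    uig n (fun i => m (i + 1) - 1) ≃g (uig (n + 1) m).induce {0}ᶜ where
  toEquiv := (finSuccAboveEquiv 0).trans
    (Equiv.subtypeEquivRight fun _ => Set.mem_compl_singleton_iff.symm)
  map_rel_iff' {a b} := by
    simp only [comap_adj, Function.Embedding.coe_subtype, Equiv.trans_apply,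
      Equiv.subtypeEquivRight_apply_coe, finSuccAboveEquiv_apply, Fin.succAbove_zero]
    rw [uig_adj_iff (n := n + 1) hm, uig_adj_iff hm.sub_one_comp_succ]
    simp only [Fin.val_succ]
    omega

theorem acyclicOrientationCount_uig_succ (hm : MonotoneOn m (Set.Icc 1 n)) (h1 : m 1 ≤ n + 1) :
    acyclicOrientationCount (uig (n + 1) m) =
      (m 1 - 1 + 1) * acyclicOrientationCount (uig n fun i => m (i + 1) - 1) := by
  rw [acyclicOrientationCount_eq_mul_of_isClique_neighborSet (uig_isClique_neighborSet_zero hm),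
    uig_degree_zero hm h1, acyclicOrientationCount_congr (uigSuccIso hm)]

theorem acyclicOrientationCount_uig (hm : MonotoneOn m (Set.Icc 1 (n - 1)))
    (hbound : ∀ i ∈ Icc 1 (n - 1), m i ≤ n) :
    acyclicOrientationCount (uig n m) = ∏ i ∈ Icc 1 (n - 1), (m i - i + 1) := by
  induction n generalizing m with
  | zero => simp [uig_eq_bot, acyclicOrientationCount_bot]
  | succ n ih =>
    rcases n with _ | n
    · simp [uig_eq_bot, acyclicOrientationCount_bot]
    have hshift : ∀ i ∈ Icc 1 n, m (i + 1) - 1 ≤ n + 1 := fun i hi => by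
      have := hbound (i + 1) (by simp at hi ⊢; omega)
      omega
    simp only [Nat.add_one_sub_one] at ih hm hbound ⊢
    rw [acyclicOrientationCount_uig_succ hm (hbound 1 (by simp)), ih hm.sub_one_comp_succ hshift,
      Finset.prod_Icc_one_succ]
    congr 1
    refine prod_congr rfl fun i _ => ?_
    omega

end UnitInterval

/-- The number of acyclic orientations of the unit interval graph determined by a weakly
increasing sequence `m = (m_1, ..., m_{n-1})` with `i ≤ m_i ≤ n` equals
`∏_{i=1}^{n-1} (m_i - i + 1)`. -/
theorem uig_acyclicOrientationCount (n : ℕ) (m : ℕ → ℕ)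
    (hmono : MonotoneOn m (Set.Icc 1 (n - 1)))
    (hbound : ∀ i ∈ Finset.Icc 1 (n - 1), i ≤ m i ∧ m i ≤ n) :
    acyclicOrientationCount (uig n m) = ∏ i ∈ Finset.Icc 1 (n - 1), (m i - i + 1) :=
  acyclicOrientationCount_uig hmono fun i hi => (hbound i hi).2
end
end

section
/- For the star graph S_n on n ≥ 4 vertices and any partition λ = (λ_1, λ_2) of n with both parts at least 2, the coefficient of e_λ in X_{S_n} equals -n if λ_1 ≠ λ_2, and -n/2 if λ_1 = λ_2. -/
open MvPolynomial Finset
open scoped Classical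

noncomputable section

/-- The star graph on `n` vertices: vertex `0` is adjacent to all other vertices and
there are no other edges. -/
def starGraph (n : ℕ) : SimpleGraph (Fin n) where
  Adj a b := a ≠ b ∧ ((a : ℕ) = 0 ∨ (b : ℕ) = 0)
  symm := by
    constructor
    rintro a b ⟨h1, h2⟩
    exact ⟨h1.symm, h2.symm⟩
  loopless := ⟨fun a h => h.1 rfl⟩

/-!
Via `esymmAlgHom`, `ℚ[y₁, …, yₙ]` is isomorphic to the algebra of symmetric polynomials in `n`
variables, with `y_k ↦ e_k`; the coefficient of `e_λ` in a symmetric polynomial is the coefficient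
of the monomial `y_λ` in its preimage. Colouring the centre of the star first gives
`X_{S_n} = ∑ⱼ xⱼ (e₁ - xⱼ)^{n-1}`, and the binomial theorem turns this into
`(-1)^{n-1} pₙ + e₁ F` with `F` symmetric. Monomials divisible by `y₁` do not matter when both parts
of `λ` are at least `2`, so `[e_λ] X_{S_n}` is `(-1)^{n-1}` times the coefficient of `y_a y_b` in the
expression of `pₙ` through the `e_k`. One step of Newton's identity
`p_k = (-1)^{k-1} k e_k - ∑_{0<i<k} (-1)^i e_i p_{k-i}` computes it from the coefficient
`(-1)^{k-1} k` of `y_k` in `p_k`.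
-/

lemma mul_sub_pow_eq_neg_one_pow_add_mul {R : Type*} [CommRing R] (x s : R) (m : ℕ) :
    x * (s - x) ^ m = (-1) ^ m * x ^ (m + 1) +
      s * ∑ k ∈ range m, ((m.choose (k + 1) : R) * (-1) ^ (m - 1 - k)) * s ^ k * x ^ (m - k) := by
  rw [sub_eq_add_neg, add_pow, sum_range_succ', mul_add, mul_sum, mul_sum, add_comm]
  congr 1
  · rw [pow_zero, one_mul, Nat.sub_zero, Nat.choose_zero_right, Nat.cast_one, neg_pow]
    ring
  · refine sum_congr rfl fun k hk => ?_
    obtain ⟨e, rfl⟩ : ∃ e, m = k + 1 + e := ⟨m - (k + 1), by rw [mem_range] at hk; omega⟩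
    rw [show k + 1 + e - (k + 1) = e by omega, show k + 1 + e - 1 - k = e by omega,
      show k + 1 + e - k = e + 1 by omega, neg_pow]
    ring

lemma sum_antidiagonal_filter_Ioo {M : Type*} [AddCommMonoid M] (k : ℕ) (g : ℕ → ℕ → M) :
    ∑ i ∈ antidiagonal k with i.1 ∈ Set.Ioo 0 k, g i.1 i.2 = ∑ i ∈ Ioo 0 k, g i (k - i) := by
  rw [sum_filter,
    Nat.sum_antidiagonal_eq_sum_range_succ fun i j => if i ∈ Set.Ioo 0 k then g i j else 0,
    ← sum_filter]
  congr 1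
  ext i
  simp only [mem_filter, mem_range, Set.mem_Ioo, mem_Ioo]
  omega

namespace MvPolynomial

variable {σ τ R : Type*} [Fintype σ] [CommRing R] {n : ℕ}

lemma coeff_single_X_mul {x z : τ} (hzx : z ≠ x) (p : MvPolynomial τ R) :
    coeff (Finsupp.single x 1) (X z * p) = 0 := by
  rw [coeff_X_mul', if_neg (by simpa [Finsupp.mem_support_iff, Finsupp.single_apply] using hzx)]

lemma coeff_single_add_single_X_mul [DecidableEq τ] (x y z : τ) (p : MvPolynomial τ R) :
    coeff (Finsupp.single x 1 + Finsupp.single y 1) (X z * p) =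
      if z = x then coeff (Finsupp.single y 1) p
      else if z = y then coeff (Finsupp.single x 1) p else 0 := by
  rw [coeff_X_mul']
  split_ifs with h hzx hzy hzx hzy <;> subst_vars
  · rw [add_tsub_cancel_left]
  · rw [add_tsub_cancel_right]
  · simp [hzx, hzy] at h
  · simp [Finsupp.single_apply] at h
  · simp [Finsupp.single_apply] at h
  · rfl

lemma exists_sum_X_mul_esymm_one_sub_pow (m : ℕ) :
    ∃ F ∈ symmetricSubalgebra σ R,
      ∑ j, X j * (esymm σ R 1 - X j) ^ m = (-1) ^ m * psum σ R (m + 1) + esymm σ R 1 * F := by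
  refine ⟨∑ k ∈ range m, ((m.choose (k + 1) : R) * (-1) ^ (m - 1 - k)) •
      (esymm σ R 1 ^ k * psum σ R (m - k)), ?_, ?_⟩
  · refine Subalgebra.sum_mem _ fun k _ => Subalgebra.smul_mem _ (Subalgebra.mul_mem _
      (Subalgebra.pow_mem _ ((mem_symmetricSubalgebra _).2 (esymm_isSymmetric σ R 1)) k)
      ((mem_symmetricSubalgebra _).2 (psum_isSymmetric σ R _))) _
  · simp only [mul_sub_pow_eq_neg_one_pow_add_mul, sum_add_distrib, psum, mul_sum, smul_eq_C_mul,
      map_mul, map_natCast, map_pow, map_neg, map_one]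
    rw [sum_comm (s := univ)]
    exact congrArg _ (sum_congr rfl fun _ _ => sum_congr rfl fun _ _ => by ring)

variable (σ R) in
def psumInEsymm (hσ : Fintype.card σ = n) (k : ℕ) : MvPolynomial (Fin n) R :=
  (esymmAlgEquiv σ R hσ).symm ⟨psum σ R k, psum_isSymmetric σ R k⟩

lemma esymmAlgHom_psumInEsymm (hσ : Fintype.card σ = n) (k : ℕ) :
    (esymmAlgHom σ R n (psumInEsymm σ R hσ k) : MvPolynomial σ R) = psum σ R k :=
  congrArg Subtype.val ((esymmAlgEquiv σ R hσ).apply_symm_apply _)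

variable [NeZero n]

/-- `esymmAlgHom` sends `X (esymmVar n k)` to `e_k` when `1 ≤ k ≤ n`; outside that range
`Fin.ofNat` wraps around and the value is meaningless. -/
def esymmVar (n : ℕ) [NeZero n] (k : ℕ) : Fin n := Fin.ofNat n (k - 1)

lemma val_esymmVar {k : ℕ} (hk : 0 < k) (hkn : k ≤ n) : (esymmVar n k : ℕ) = k - 1 := by
  simp [esymmVar, Nat.mod_eq_of_lt (show k - 1 < n by omega)]

lemma esymmVar_inj {k l : ℕ} (hk : 0 < k) (hkn : k ≤ n) (hl : 0 < l) (hln : l ≤ n) :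
    esymmVar n k = esymmVar n l ↔ k = l := by
  rw [Fin.ext_iff, val_esymmVar hk hkn, val_esymmVar hl hln]
  omega

lemma esymmAlgHom_X_esymmVar {k : ℕ} (hk : 0 < k) (hkn : k ≤ n) :
    (esymmAlgHom σ R n (X (esymmVar n k)) : MvPolynomial σ R) = esymm σ R k := by
  rw [esymmAlgHom_apply, aeval_X, val_esymmVar hk hkn, Nat.sub_add_cancel hk]

def esymmPartExponent (μ : n.Partition) : Fin n →₀ ℕ :=
  Multiset.toFinsupp (μ.parts.map (esymmVar n))

lemma esymmAlgHom_monomial_esymmPartExponent (μ : n.Partition) :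
    (esymmAlgHom σ R n (monomial (esymmPartExponent μ) 1) : MvPolynomial σ R) =
      esymmPart σ R μ := by
  suffices ∀ s : Multiset ℕ, (∀ k ∈ s, 0 < k ∧ k ≤ n) →
      (esymmAlgHom σ R n (monomial (Multiset.toFinsupp (s.map (esymmVar n))) 1) :
        MvPolynomial σ R) = (s.map (esymm σ R)).prod from
    this _ fun k hk => ⟨μ.parts_pos hk, Nat.Partition.le_of_mem_parts hk⟩
  intro s
  induction s using Multiset.induction_on with
  | empty => simp
  | cons k s ih =>
    intro hs
    obtain ⟨hk, hkn⟩ := hs k (Multiset.mem_cons_self k s)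
    rw [Multiset.map_cons, ← Multiset.singleton_add, Multiset.toFinsupp_add,
      Multiset.toFinsupp_singleton, ← mul_one (1 : R), ← monomial_mul, map_mul,
      Subalgebra.coe_mul, ih fun l hl => hs l (Multiset.mem_cons_of_mem hl), ← X,
      esymmAlgHom_X_esymmVar hk hkn, Multiset.map_cons, Multiset.prod_cons]

lemma esymmPartExponent_injective : Function.Injective (esymmPartExponent (n := n)) := by
  intro μ ν h
  have hparts : ∀ ρ : n.Partition,
      (ρ.parts.map (esymmVar n)).map (fun i : Fin n => (i : ℕ) + 1) = ρ.parts := by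
    intro ρ
    rw [Multiset.map_map]
    refine (Multiset.map_congr rfl fun k hk => ?_).trans (Multiset.map_id _)
    have hk0 := ρ.parts_pos hk
    simp [val_esymmVar hk0 (Nat.Partition.le_of_mem_parts hk)]
    omega
  refine Nat.Partition.ext ?_
  rw [← hparts μ, ← hparts ν, Multiset.toFinsupp.injective h]

lemma esymmPartExponent_twoP {a b : ℕ} (ha : 0 < a) (hb : 0 < b) (hab : a + b = n) :
    esymmPartExponent (twoP n a b hab) =
      Finsupp.single (esymmVar n a) 1 + Finsupp.single (esymmVar n b) 1 := by
  have hparts : (twoP n a b hab).parts = {a, b} := by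
    change Multiset.filter (· ≠ 0) {a, b} = {a, b}
    exact Multiset.filter_eq_self.2 fun k hk => by simp at hk; omega
  rw [esymmPartExponent, hparts, Multiset.insert_eq_cons, Multiset.map_cons,
    Multiset.map_singleton, ← Multiset.singleton_add, Multiset.toFinsupp_add,
    Multiset.toFinsupp_singleton, Multiset.toFinsupp_singleton]

lemma coeff_esymmPartExponent_of_esymmAlgHom_eq (hn : n ≤ Fintype.card σ)
    {Q : MvPolynomial (Fin n) R} {c : n.Partition → R}
    (h : (esymmAlgHom σ R n Q : MvPolynomial σ R) = ∑ μ, c μ • esymmPart σ R μ)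
    (μ : n.Partition) : coeff (esymmPartExponent μ) Q = c μ := by
  have hQ : Q = ∑ ν, c ν • monomial (esymmPartExponent ν) 1 := by
    refine esymmAlgHom_injective R hn (Subtype.val_injective ?_)
    simp only [h, map_sum, map_smul, AddSubmonoidClass.coe_finsetSum, SetLike.val_smul,
      esymmAlgHom_monomial_esymmPartExponent]
  rw [hQ, coeff_sum, sum_eq_single μ]
  · simp
  · intro ν _ hν
    rw [coeff_smul, coeff_monomial, if_neg (esymmPartExponent_injective.ne hν), smul_zero]
  · simp

variable (hσ : Fintype.card σ = n)
include hσ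

lemma psumInEsymm_eq {k : ℕ} (hk : 0 < k) (hkn : k ≤ n) :
    psumInEsymm σ R hσ k = ((-1) ^ (k + 1) * k : R) • X (esymmVar n k) -
      ∑ i ∈ Ioo 0 k, (-1 : R) ^ i • (X (esymmVar n i) * psumInEsymm σ R hσ (k - i)) := by
  refine esymmAlgHom_injective R hσ.ge (Subtype.val_injective ?_)
  simp only [esymmAlgHom_psumInEsymm, map_sub, map_sum, map_smul, map_mul, Subalgebra.coe_sub,
    AddSubmonoidClass.coe_finsetSum, SetLike.val_smul, Subalgebra.coe_mul,
    esymmAlgHom_X_esymmVar hk hkn, psum_eq_mul_esymm_sub_sum σ R k hk]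
  rw [sum_antidiagonal_filter_Ioo k fun i j => (-1) ^ i * esymm σ R i * psum σ R j]
  congr 1
  · simp [smul_eq_C_mul]
  · refine sum_congr rfl fun i hi => ?_
    rw [mem_Ioo] at hi
    rw [esymmAlgHom_X_esymmVar hi.1 (by omega), smul_eq_C_mul]
    simp [mul_assoc]

lemma coeff_single_psumInEsymm {k : ℕ} (hk : 0 < k) (hkn : k ≤ n) :
    coeff (Finsupp.single (esymmVar n k) 1) (psumInEsymm σ R hσ k) = (-1) ^ (k + 1) * k := by
  rw [psumInEsymm_eq hσ hk hkn, coeff_sub, coeff_smul, coeff_X, if_pos rfl, smul_eq_mul, mul_one,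
    coeff_sum, sum_eq_zero, sub_zero]
  intro i hi
  rw [mem_Ioo] at hi
  rw [coeff_smul, coeff_single_X_mul, smul_zero]
  rw [Ne, esymmVar_inj hi.1 (by omega) hk hkn]
  omega

lemma coeff_pair_psumInEsymm {a b : ℕ} (ha : 0 < a) (hb : 0 < b) (hab : a + b ≤ n) :
    coeff (Finsupp.single (esymmVar n a) 1 + Finsupp.single (esymmVar n b) 1)
      (psumInEsymm σ R hσ (a + b)) = (-1) ^ (a + b) * if a = b then (a : R) else (a + b : ℕ) := by
  have hlin : coeff (Finsupp.single (esymmVar n a) 1 + Finsupp.single (esymmVar n b) 1)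
      (X (esymmVar n (a + b)) : MvPolynomial (Fin n) R) = 0 := by
    rw [← mul_one (X _), coeff_single_add_single_X_mul]
    simp only [esymmVar_inj (n := n) (k := a + b) (by omega) hab ha (by omega),
      esymmVar_inj (n := n) (k := a + b) (by omega) hab hb (by omega)]
    rw [if_neg (by omega), if_neg (by omega)]
  have hterm : ∀ i ∈ Ioo 0 (a + b),
      coeff (Finsupp.single (esymmVar n a) 1 + Finsupp.single (esymmVar n b) 1)
        (X (esymmVar n i) * psumInEsymm σ R hσ (a + b - i)) =
      if i = a then (-1) ^ (b + 1) * (b : R) else if i = b then (-1) ^ (a + 1) * (a : R) else 0 := by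
    intro i hi
    rw [mem_Ioo] at hi
    rw [coeff_single_add_single_X_mul]
    simp only [esymmVar_inj (n := n) (l := a) hi.1 (by omega) ha (by omega),
      esymmVar_inj (n := n) (l := b) hi.1 (by omega) hb (by omega)]
    split_ifs with hia hib
    · subst hia
      rw [Nat.add_sub_cancel_left, coeff_single_psumInEsymm hσ hb (by omega)]
    · subst hib
      rw [Nat.add_sub_cancel, coeff_single_psumInEsymm hσ ha (by omega)]
    · rfl
  rw [psumInEsymm_eq hσ (by omega) hab, coeff_sub, coeff_smul, hlin, smul_zero, zero_sub,
    coeff_sum]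
  simp_rw [coeff_smul, smul_eq_mul]
  rw [sum_congr rfl fun i hi => by rw [hterm i hi]]
  have hmem : ∀ {i}, 0 < i → i < a + b → i ∈ Ioo 0 (a + b) := fun h0 h1 => mem_Ioo.2 ⟨h0, h1⟩
  by_cases h : a = b
  · subst h
    rw [sum_eq_single_of_mem a (hmem ha (by omega)) fun i _ hi => by simp [hi]]
    simp only [if_true, pow_add, pow_succ]
    ring
  · rw [sum_eq_add_of_mem a b (hmem ha (by omega)) (hmem hb (by omega)) h
      fun i _ hi => by simp [hi.1, hi.2]]
    simp only [h, Ne.symm h, if_true, if_false, pow_add, pow_succ, Nat.cast_add]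
    ring

end MvPolynomial

lemma starGraph_isProper_iff {α : Type*} {n : ℕ} [NeZero n] (κ : Fin n → α) :
    (∀ u v, (starGraph n).Adj u v → κ u ≠ κ v) ↔ ∀ v ≠ 0, κ v ≠ κ 0 := by
  refine ⟨fun h v hv => h v 0 ⟨hv, Or.inr rfl⟩, ?_⟩
  rintro h u v ⟨huv, hu | hv⟩
  · obtain rfl : u = 0 := Fin.ext hu
    exact (h v (Ne.symm huv)).symm
  · obtain rfl : v = 0 := Fin.ext hv
    exact h u huv

lemma csf_starGraph (n : ℕ) [NeZero n] :
    csf n (starGraph n) = ∑ j, X j * (∑ i, X i - X j) ^ (n - 1) := by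
  obtain ⟨m, rfl⟩ := Nat.exists_eq_add_one_of_ne_zero (NeZero.ne n)
  rw [Nat.add_sub_cancel, csf,
    ← sum_fiberwise_of_maps_to (g := fun κ => κ 0) (t := univ) fun _ _ => mem_univ _]
  refine sum_congr rfl fun j _ => ?_
  calc _ = ∑ κ ∈ Fintype.piFinset (fun v : Fin (m + 1) => if v = 0 then {j} else univ.erase j),
          ∏ v, (X (κ v) : MvPolynomial (Fin (m + 1)) ℚ) := by
        congr 1
        ext κ
        simp only [filter_filter, mem_filter, mem_univ, true_and, starGraph_isProper_iff,
          Fintype.mem_piFinset]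
        simp only [Fin.forall_fin_succ, if_pos, Fin.succ_ne_zero, if_false, mem_singleton,
          mem_erase, mem_univ, and_true, ne_eq, not_true, not_false_eq_true, imp_self, true_and,
          forall_const]
        constructor
        · rintro ⟨h, rfl⟩
          exact ⟨rfl, h⟩
        · rintro ⟨rfl, h⟩
          exact ⟨h, rfl⟩
    _ = _ := by
      rw [← prod_univ_sum, Fin.prod_univ_succ]
      simp [Fin.succ_ne_zero, sum_erase_eq_sub]

lemma exists_esymmAlgHom_eq_csf_starGraph (n : ℕ) [NeZero n] :
    ∃ G : MvPolynomial (Fin n) ℚ, (esymmAlgHom (Fin n) ℚ n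
      ((-1 : ℚ) ^ (n - 1) • psumInEsymm (Fin n) ℚ (Fintype.card_fin n) n +
        X (esymmVar n 1) * G) : MvPolynomial (Fin n) ℚ) = csf n (starGraph n) := by
  obtain ⟨F, hFsym, hF⟩ := exists_sum_X_mul_esymm_one_sub_pow (σ := Fin n) (R := ℚ) (n - 1)
  obtain ⟨G, hG⟩ := esymmAlgHom_surjective ℚ (Fintype.card_fin n).le ⟨F, hFsym⟩
  refine ⟨G, ?_⟩
  rw [csf_starGraph, ← esymm_one, hF, Nat.sub_add_cancel NeZero.one_le]
  simp only [map_add, map_smul, map_mul, Subalgebra.coe_add, SetLike.val_smul,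
    Subalgebra.coe_mul, esymmAlgHom_psumInEsymm, esymmAlgHom_X_esymmVar one_pos NeZero.one_le, hG]
  rw [smul_eq_C_mul, map_pow, map_neg, map_one]

theorem star_coeff_e_two_part_general (n : ℕ) (a b : ℕ) (ha : 2 ≤ a) (hb : 2 ≤ b)
    (hab : a + b = n)
    (c : n.Partition → ℚ)
    (hc : csf n (starGraph n) = ∑ μ : n.Partition, c μ • esymmPart (Fin n) ℚ μ) :
    c (twoP n a b hab) = if a = b then -(n : ℚ) / 2 else -(n : ℚ) := by
  subst hab
  have : NeZero (a + b) := ⟨by omega⟩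
  obtain ⟨G, hG⟩ := exists_esymmAlgHom_eq_csf_starGraph (a + b)
  have hy₁ : ∀ {k}, 2 ≤ k → k ≤ a + b → esymmVar (a + b) 1 ≠ esymmVar (a + b) k :=
    fun hk hkn => by rw [Ne, esymmVar_inj] <;> omega
  rw [← coeff_esymmPartExponent_of_esymmAlgHom_eq (Fintype.card_fin _).ge (hG.trans hc),
    esymmPartExponent_twoP (by omega) (by omega), coeff_add, coeff_smul,
    coeff_pair_psumInEsymm _ (by omega) (by omega) le_rfl, coeff_single_add_single_X_mul,
    if_neg (hy₁ ha (by omega)), if_neg (hy₁ hb (by omega)), add_zero, smul_eq_mul, ← mul_assoc,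
    ← pow_add, (show Odd (a + b - 1 + (a + b)) from ⟨a + b - 1, by omega⟩).neg_one_pow]
  split_ifs with h
  · subst h
    push_cast
    ring
  · ring

/-- For the star graph `S_n` on `n ≥ 4` vertices and any partition `λ = (λ₁, λ₂)` of `n`
with both parts at least `2`, the coefficient of `e_λ` in `X_{S_n}` equals `-n` if
`λ₁ ≠ λ₂`, and `-n/2` if `λ₁ = λ₂`. -/
theorem star_coeff_e_two_part (n : ℕ) (hn : 4 ≤ n) (a b : ℕ) (ha : 2 ≤ a) (hb : 2 ≤ b)
    (hab : a + b = n)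
    (c : n.Partition → ℚ)
    (hc : csf n (starGraph n) = ∑ μ : n.Partition, c μ • esymmPart (Fin n) ℚ μ) :
    c (twoP n a b hab) = if a = b then -(n : ℚ) / 2 else -(n : ℚ) :=
  star_coeff_e_two_part_general n a b ha hb hab c hc
end
end
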